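/- Let F be free of rank r, N ⊴ F, and let (f, b) be a nontrivial element of the image of the Magnus embedding φ(F/N') ⊆ Z^r ≀ (F/N), where b ∈ F/N has infinite order. Then (f, b) is not conjugate in Z^r ≀ (F/N) to any element of the form (1, c), where 1 is the trivial function. -/

import Mathlib

/-- The action of `B` on `B → A` by translation: `(b • f)(x) = f(b⁻¹x)`. -/
def shiftAut (A B : Type*) [Group A] [Group B] : B →* MulAut (B → A) where
  toFun b :=
    { toFun := fun f x => f (b⁻¹ * x)
      invFun := fun f x => f (b * x)
      left_inv := fun f => by funext x; simp [← mul_assoc]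
      right_inv := fun f => by funext x; simp [← mul_assoc]
      map_mul' := fun f g => rfl }
  map_one' := MulEquiv.ext fun f => funext fun x => by simp
  map_mul' b c := MulEquiv.ext fun f => funext fun x => by
    simp [mul_assoc]

/-- The (unrestricted) wreath product `A ≀ B`; the restricted wreath product is
the set of its elements whose first component has finite (mul-)support. -/
abbrev WreathProduct (A B : Type*) [Group A] [Group B] :=
  SemidirectProduct (B → A) B (shiftAut A B)

/-- The augmentation map `ℤ(F) → ℤ`. -/
noncomputable def augZ (G : Type*) [Group G] : MonoidAlgebra ℤ G →ₐ[ℤ] ℤ :=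
  MonoidAlgebra.lift ℤ ℤ G 1

variable {r : ℕ}

/-- The Magnus map `F → ℤ^r ≀ (F/N)`, `w ↦ (f^w, α(w))`, where `f^w` records
the images in `ℤ(F/N)` of the Fox derivatives `∂w/∂x_i`. -/
noncomputable def magnusWP (N : Subgroup (FreeGroup (Fin r))) [N.Normal]
    (D : Fin r → (MonoidAlgebra ℤ (FreeGroup (Fin r)) →+ MonoidAlgebra ℤ (FreeGroup (Fin r))))
    (w : FreeGroup (Fin r)) :
    WreathProduct (Multiplicative (Fin r → ℤ)) (FreeGroup (Fin r) ⧸ N) :=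
  ⟨fun q => Multiplicative.ofAdd fun i =>
      (MonoidAlgebra.mapDomainRingHom ℤ (QuotientGroup.mk' N)
        (D i (MonoidAlgebra.of ℤ (FreeGroup (Fin r)) w))).coeff q,
    QuotientGroup.mk w⟩

instance monoidAlgebraCoeFun {G : Type*} [Monoid G] :
    CoeFun (MonoidAlgebra ℤ G) (fun _ => G → ℤ) := ⟨fun x => x.coeff⟩

lemma augZ_of {G : Type*} [Group G] (u : G) : augZ G (MonoidAlgebra.of ℤ G u) = 1 := by
  simp [augZ]

lemma fox_identity
    (D : Fin r → (MonoidAlgebra ℤ (FreeGroup (Fin r)) →+ MonoidAlgebra ℤ (FreeGroup (Fin r))))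
    (hder : ∀ i a b, D i (a * b) = augZ _ b • D i a + a * D i b)
    (hbase : ∀ i j, D i (MonoidAlgebra.of ℤ (FreeGroup (Fin r)) (FreeGroup.of j)) =
      if i = j then 1 else 0)
    (w : FreeGroup (Fin r)) :
    (∑ i : Fin r, D i (MonoidAlgebra.of ℤ (FreeGroup (Fin r)) w) *
        (MonoidAlgebra.of ℤ (FreeGroup (Fin r)) (FreeGroup.of i) - 1))
      = MonoidAlgebra.of ℤ (FreeGroup (Fin r)) w - 1 := by
  set e := MonoidAlgebra.of ℤ (FreeGroup (Fin r)) with he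
  have hD1 : ∀ i, D i 1 = 0 := by
    intro i
    have h := hder i 1 1
    simp only [mul_one, map_one, one_smul, one_mul] at h
    exact (left_eq_add.mp h)
  have hinv : ∀ (u : FreeGroup (Fin r)),
      (∑ i : Fin r, D i (e u) * (e (FreeGroup.of i) - 1)) = e u - 1 →
      (∑ i : Fin r, D i (e u⁻¹) * (e (FreeGroup.of i) - 1)) = e u⁻¹ - 1 := by
    intro u hu
    have hDinv : ∀ i, D i (e u⁻¹) = -(e u⁻¹ * D i (e u)) := by
      intro i
      have h0 : D i (e u * e u⁻¹) = 0 := by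
        rw [← map_mul, mul_inv_cancel, map_one, hD1]
      rw [hder, augZ_of, one_smul] at h0
      have h1 := congrArg (fun z => e u⁻¹ * z) h0
      simp only [mul_add, ← mul_assoc, ← map_mul, inv_mul_cancel, map_one, one_mul,
        mul_zero] at h1
      exact eq_neg_of_add_eq_zero_right h1
    have : (∑ i : Fin r, D i (e u⁻¹) * (e (FreeGroup.of i) - 1))
        = -(e u⁻¹ * ∑ i : Fin r, D i (e u) * (e (FreeGroup.of i) - 1)) := by
      rw [Finset.mul_sum]
      rw [← neg_eq_iff_eq_neg, ← Finset.sum_neg_distrib]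
      exact Finset.sum_congr rfl fun i _ => by rw [hDinv]; noncomm_ring
    rw [this, hu, mul_sub, mul_one, ← map_mul, inv_mul_cancel, map_one, neg_sub]
  induction w using FreeGroup.induction_on with
  | C1 => simp [hD1, map_one]
  | of x =>
      simp only [hbase, ite_mul, one_mul, zero_mul]
      rw [Finset.sum_ite_eq' (Finset.univ) x (fun i => e (FreeGroup.of i) - 1)]
      simp
  | inv_of x ih => exact hinv _ ih
  | mul x y hx hy =>
      have hmul : ∀ i, D i (e (x * y)) = D i (e x) + e x * D i (e y) := by
        intro i
        rw [map_mul, hder, augZ_of, one_smul]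
      simp only [hmul, add_mul, Finset.sum_add_distrib, hx, mul_assoc]
      rw [← Finset.mul_sum, hy, map_mul]
      noncomm_ring

/-- a nontrivial element `(f, b)` of the image of the Magnus
embedding, with `b` of infinite order in `F/N`, is not conjugate in the
restricted wreath product `ℤ^r ≀ (F/N)` to any element of the form `(1, c)`. -/
theorem magnus_image_not_conjugate_to_base (N : Subgroup (FreeGroup (Fin r))) [N.Normal]
    (D : Fin r → (MonoidAlgebra ℤ (FreeGroup (Fin r)) →+ MonoidAlgebra ℤ (FreeGroup (Fin r))))
    (hder : ∀ i a b, D i (a * b) = augZ _ b • D i a + a * D i b)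
    (hbase : ∀ i j, D i (MonoidAlgebra.of ℤ (FreeGroup (Fin r)) (FreeGroup.of j)) =
      if i = j then 1 else 0)
    (w : FreeGroup (Fin r)) (hne : magnusWP N D w ≠ 1)
    (hb : ¬ IsOfFinOrder ((magnusWP N D w).right)) :
    ∀ c : FreeGroup (Fin r) ⧸ N,
      ¬ ∃ γ : WreathProduct (Multiplicative (Fin r → ℤ)) (FreeGroup (Fin r) ⧸ N),
        (Function.mulSupport γ.left).Finite ∧
        γ⁻¹ * magnusWP N D w * γ =
          ⟨(1 : (FreeGroup (Fin r) ⧸ N) → Multiplicative (Fin r → ℤ)), c⟩ := by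
  classical
  intro c
  rintro ⟨γ, hfin, hconj⟩
  set b : FreeGroup (Fin r) ⧸ N := (QuotientGroup.mk w : FreeGroup (Fin r) ⧸ N) with hbdef
  have hbfin : ¬ IsOfFinOrder b := hb
  set F : Fin r → MonoidAlgebra ℤ (FreeGroup (Fin r) ⧸ N) := fun i =>
    MonoidAlgebra.mapDomainRingHom ℤ (QuotientGroup.mk' N)
      (D i (MonoidAlgebra.of ℤ (FreeGroup (Fin r)) w)) with hF
  set s : Fin r → FreeGroup (Fin r) ⧸ N := fun i =>
    (QuotientGroup.mk (FreeGroup.of i) : FreeGroup (Fin r) ⧸ N) with hs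
  -- mapped Fox identity
  have hmapof : ∀ u : FreeGroup (Fin r),
      MonoidAlgebra.mapDomainRingHom ℤ (QuotientGroup.mk' N)
        (MonoidAlgebra.of ℤ (FreeGroup (Fin r)) u)
      = MonoidAlgebra.of ℤ (FreeGroup (Fin r) ⧸ N) (QuotientGroup.mk u) := by
    intro u
    exact MonoidAlgebra.mapDomain_single
  have hfox := congrArg (MonoidAlgebra.mapDomainRingHom ℤ (QuotientGroup.mk' N))
    (fox_identity D hder hbase w)
  rw [map_sub, map_one, map_sum, hmapof] at hfox
  have hfox' : (∑ i : Fin r, (F i * MonoidAlgebra.of ℤ _ (s i) - F i))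
      = MonoidAlgebra.of ℤ (FreeGroup (Fin r) ⧸ N) b - 1 := by
    rw [← hfox]
    apply Finset.sum_congr rfl
    intro i _
    rw [map_mul, map_sub, map_one, hmapof, mul_sub, mul_one]
  -- pointwise flow equation
  have hsub : ∀ (u v : MonoidAlgebra ℤ (FreeGroup (Fin r) ⧸ N)) (q : FreeGroup (Fin r) ⧸ N),
      (u - v) q = u q - v q := fun u v q => by rw [MonoidAlgebra.coeff_sub, Finsupp.sub_apply]
  have hflow : ∀ q : FreeGroup (Fin r) ⧸ N,
      (∑ i : Fin r, (F i (q * (s i)⁻¹) - F i q))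
        = (if b = q then 1 else 0) - (if (1 : FreeGroup (Fin r) ⧸ N) = q then (1:ℤ) else 0) := by
    intro q
    have h := congrArg (fun u : MonoidAlgebra ℤ (FreeGroup (Fin r) ⧸ N) => u q) hfox'
    rw [MonoidAlgebra.coeff_sum, Finset.sum_apply'] at h
    calc (∑ i : Fin r, (F i (q * (s i)⁻¹) - F i q))
        = ∑ i : Fin r, (F i * MonoidAlgebra.of ℤ (FreeGroup (Fin r) ⧸ N) (s i) - F i) q := by
          refine Finset.sum_congr rfl fun i _ => ?_
          rw [hsub, MonoidAlgebra.of_apply, MonoidAlgebra.coeff_mul_single_apply, mul_one]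
      _ = (MonoidAlgebra.of ℤ (FreeGroup (Fin r) ⧸ N) b - 1) q := h
      _ = _ := by
          rw [hsub, MonoidAlgebra.of_apply, MonoidAlgebra.one_def, MonoidAlgebra.coeff_single,
              MonoidAlgebra.coeff_single, Finsupp.single_apply,
            Finsupp.single_apply]
  -- the conjugation equation, pointwise
  have hWγ : magnusWP N D w * γ = γ *
      (⟨(1 : (FreeGroup (Fin r) ⧸ N) → Multiplicative (Fin r → ℤ)), c⟩ :
        WreathProduct (Multiplicative (Fin r → ℤ)) (FreeGroup (Fin r) ⧸ N)) := by
    have := congrArg (γ * ·) hconj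
    simpa [← mul_assoc] using this
  have hleft : (magnusWP N D w).left *
      (shiftAut (Multiplicative (Fin r → ℤ)) (FreeGroup (Fin r) ⧸ N)
        ((magnusWP N D w).right)) γ.left = γ.left := by
    have h := congrArg SemidirectProduct.left hWγ
    simpa only [SemidirectProduct.mul_left, map_one, mul_one] using h
  set g : (FreeGroup (Fin r) ⧸ N) → Fin r → ℤ := fun q => Multiplicative.toAdd (γ.left q)
    with hg
  have hE : ∀ (q : FreeGroup (Fin r) ⧸ N) (i : Fin r),
      F i q = g q i - g (b⁻¹ * q) i := by
    intro q i
    have h1 := congrFun hleft q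
    rw [Pi.mul_apply] at h1
    have h2 := congrFun (congrArg Multiplicative.toAdd h1) i
    rw [toAdd_mul, Pi.add_apply] at h2
    have e1 : Multiplicative.toAdd ((magnusWP N D w).left q) i = F i q := rfl
    have e2 : Multiplicative.toAdd (((shiftAut (Multiplicative (Fin r → ℤ))
        (FreeGroup (Fin r) ⧸ N) ((magnusWP N D w).right)) γ.left) q) i
        = g (b⁻¹ * q) i := rfl
    have e3 : Multiplicative.toAdd (γ.left q) i = g q i := rfl
    rw [e1, e2, e3] at h2
    exact eq_sub_of_add_eq h2
  -- the height function ν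
  have hinj : Function.Injective fun n : ℤ => b ^ n :=
    injective_zpow_iff_not_isOfFinOrder.2 hbfin
  have hex : ∀ y : FreeGroup (Fin r) ⧸ N, ∃ n : ℤ,
      y = (QuotientGroup.mk (s := Subgroup.zpowers b) y).out * b ^ n := by
    intro y
    obtain ⟨h, hh⟩ := QuotientGroup.mk_out_eq_mul (Subgroup.zpowers b) y
    obtain ⟨n, hn⟩ := Subgroup.mem_zpowers_iff.mp h.2
    refine ⟨-n, ?_⟩
    rw [hh, zpow_neg, hn]
    group
  choose ν0 hν0 using hex
  set ν : (FreeGroup (Fin r) ⧸ N) → ℤ := fun x => -(ν0 x⁻¹) with hν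
  have hshift : ∀ x : FreeGroup (Fin r) ⧸ N, ν (b * x) = ν x + 1 := by
    intro x
    have h1 := hν0 x⁻¹
    have h2 := hν0 ((b * x)⁻¹)
    have hcoset : (QuotientGroup.mk (s := Subgroup.zpowers b) ((b * x)⁻¹))
        = QuotientGroup.mk (s := Subgroup.zpowers b) x⁻¹ := by
      rw [mul_inv_rev]
      exact QuotientGroup.mk_mul_of_mem x⁻¹ (inv_mem (Subgroup.mem_zpowers b))
    rw [hcoset] at h2
    have h3 : (QuotientGroup.mk (s := Subgroup.zpowers b) x⁻¹).out * b ^ (ν0 ((b * x)⁻¹))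
        = (QuotientGroup.mk (s := Subgroup.zpowers b) x⁻¹).out * b ^ (ν0 x⁻¹ - 1) := by
      rw [← h2, mul_inv_rev]
      conv_lhs => rw [h1]
      rw [mul_assoc, ← zpow_sub_one]
    have h4 := hinj (mul_left_cancel h3)
    simp only [hν]
    omega
  -- support finiteness helpers
  have hsuppF : ∀ i : Fin r, ∀ c : (FreeGroup (Fin r) ⧸ N) → ℤ,
      (Function.support fun q => F i q * c q).Finite := by
    intro i c
    apply Set.Finite.subset ((F i).coeff.support.finite_toSet)
    intro q hq
    simp only [Function.mem_support, ne_eq] at hq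
    have : F i q ≠ 0 := fun h => hq (by rw [h, zero_mul])
    exact Finset.mem_coe.2 (Finsupp.mem_support_iff.2 this)
  have hsuppFs : ∀ i : Fin r, ∀ c : (FreeGroup (Fin r) ⧸ N) → ℤ,
      (Function.support fun q => F i (q * (s i)⁻¹) * c q).Finite := by
    intro i c
    apply Set.Finite.subset (((F i).coeff.support.finite_toSet).image (· * s i))
    intro q hq
    simp only [Function.mem_support, ne_eq] at hq
    have : F i (q * (s i)⁻¹) ≠ 0 := fun h => hq (by rw [h, zero_mul])
    exact ⟨q * (s i)⁻¹, Finset.mem_coe.2 (Finsupp.mem_support_iff.2 this), by group⟩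
  have hsuppg : ∀ i : Fin r, ∀ c : (FreeGroup (Fin r) ⧸ N) → ℤ,
      (Function.support fun q => g q i * c q).Finite := by
    intro i c
    apply Set.Finite.subset hfin
    intro q hq
    simp only [Function.mem_support, ne_eq] at hq
    intro h1
    apply hq
    rw [show g q i = 0 from by rw [hg]; simp [h1], zero_mul]
  have hsuppgb : ∀ i : Fin r, ∀ c : (FreeGroup (Fin r) ⧸ N) → ℤ,
      (Function.support fun q => g (b⁻¹ * q) i * c q).Finite := by
    intro i c
    apply Set.Finite.subset (hfin.image (b * ·))
    intro q hq
    simp only [Function.mem_support, ne_eq] at hq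
    refine ⟨b⁻¹ * q, ?_, by group⟩
    intro h1
    apply hq
    rw [show g (b⁻¹ * q) i = 0 from by rw [hg]; simp [h1], zero_mul]
  -- each per-coordinate finsum vanishes
  have key : ∀ i : Fin r,
      (∑ᶠ q : FreeGroup (Fin r) ⧸ N, (F i (q * (s i)⁻¹) - F i q) * ν q) = 0 := by
    intro i
    calc (∑ᶠ q : FreeGroup (Fin r) ⧸ N, (F i (q * (s i)⁻¹) - F i q) * ν q)
        = ∑ᶠ q : FreeGroup (Fin r) ⧸ N, (F i (q * (s i)⁻¹) * ν q - F i q * ν q) := by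
          exact finsum_congr fun q => by ring
      _ = (∑ᶠ q : FreeGroup (Fin r) ⧸ N, F i (q * (s i)⁻¹) * ν q)
          - ∑ᶠ q : FreeGroup (Fin r) ⧸ N, F i q * ν q :=
          finsum_sub_distrib (hsuppFs i ν) (hsuppF i ν)
      _ = (∑ᶠ q : FreeGroup (Fin r) ⧸ N, F i q * ν (q * s i))
          - ∑ᶠ q : FreeGroup (Fin r) ⧸ N, F i q * ν q := by
          rw [← finsum_comp_equiv (Equiv.mulRight (s i))
            (f := fun q => F i (q * (s i)⁻¹) * ν q)]
          congr 1
          exact finsum_congr fun q => by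
            simp only [Equiv.coe_mulRight, mul_inv_cancel_right]
      _ = ∑ᶠ q : FreeGroup (Fin r) ⧸ N, F i q * (ν (q * s i) - ν q) := by
          rw [← finsum_sub_distrib (hsuppF i (fun q => ν (q * s i))) (hsuppF i ν)]
          exact finsum_congr fun q => by ring
      _ = ∑ᶠ q : FreeGroup (Fin r) ⧸ N,
            (g q i * (ν (q * s i) - ν q) - g (b⁻¹ * q) i * (ν (q * s i) - ν q)) := by
          exact finsum_congr fun q => by rw [hE q i]; ring
      _ = (∑ᶠ q : FreeGroup (Fin r) ⧸ N, g q i * (ν (q * s i) - ν q))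
          - ∑ᶠ q : FreeGroup (Fin r) ⧸ N, g (b⁻¹ * q) i * (ν (q * s i) - ν q) :=
          finsum_sub_distrib (hsuppg i _) (hsuppgb i _)
      _ = 0 := by
          rw [← finsum_comp_equiv (Equiv.mulLeft b)
            (f := fun q => g (b⁻¹ * q) i * (ν (q * s i) - ν q))]
          rw [sub_eq_zero]
          exact finsum_congr fun q => by
            simp only [Equiv.coe_mulLeft, inv_mul_cancel_left]
            rw [mul_assoc, hshift, hshift]
            ring
  -- total sum equals 1
  have htot : (∑ᶠ q : FreeGroup (Fin r) ⧸ N,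
      (∑ i : Fin r, (F i (q * (s i)⁻¹) - F i q)) * ν q) = 1 := by
    have h1 : ∀ q : FreeGroup (Fin r) ⧸ N,
        (∑ i : Fin r, (F i (q * (s i)⁻¹) - F i q)) * ν q
        = (if q = b then ν b else 0) - (if q = 1 then ν 1 else 0) := by
      intro q
      rw [hflow q]
      have hb1 : b ≠ 1 := fun h => hbfin (by rw [h]; exact IsOfFinOrder.one)
      by_cases hqb : b = q
      · rw [← hqb]
        have h2 : ¬(1 : FreeGroup (Fin r) ⧸ N) = b := fun h => hb1 h.symm
        rw [if_pos rfl, if_neg h2, if_pos rfl, if_neg hb1]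
        ring
      · by_cases hq1 : (1 : FreeGroup (Fin r) ⧸ N) = q
        · rw [← hq1, if_neg hb1, if_pos rfl, if_neg (fun h => hb1 h.symm), if_pos rfl]
          ring
        · rw [if_neg hqb, if_neg hq1, if_neg (fun h => hqb h.symm),
            if_neg (fun h => hq1 h.symm)]
          ring
    rw [finsum_congr h1]
    rw [finsum_sub_distrib]
    · rw [finsum_eq_single _ b (fun x hx => by rw [if_neg hx]),
        finsum_eq_single _ (1 : FreeGroup (Fin r) ⧸ N) (fun x hx => by rw [if_neg hx])]
      rw [if_pos rfl, if_pos rfl]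
      have hsh := hshift 1
      rw [mul_one] at hsh
      omega
    · exact Set.Finite.subset (Set.finite_singleton b) (fun x hx => by
        simp only [Function.mem_support, ne_eq] at hx
        by_contra hxb
        exact hx (if_neg (by simpa using hxb)))
    · exact Set.Finite.subset (Set.finite_singleton (1 : FreeGroup (Fin r) ⧸ N))
        (fun x hx => by
          simp only [Function.mem_support, ne_eq] at hx
          by_contra hxb
          exact hx (if_neg (by simpa using hxb)))
  -- swap and contradict
  have hswap : (∑ᶠ q : FreeGroup (Fin r) ⧸ N,
      (∑ i : Fin r, (F i (q * (s i)⁻¹) - F i q)) * ν q) = 0 := by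
    calc (∑ᶠ q : FreeGroup (Fin r) ⧸ N, (∑ i : Fin r, (F i (q * (s i)⁻¹) - F i q)) * ν q)
        = ∑ᶠ q : FreeGroup (Fin r) ⧸ N, ∑ i : Fin r, (F i (q * (s i)⁻¹) - F i q) * ν q :=
          finsum_congr fun q => by rw [Finset.sum_mul]
      _ = ∑ i : Fin r, ∑ᶠ q : FreeGroup (Fin r) ⧸ N, (F i (q * (s i)⁻¹) - F i q) * ν q := by
          apply finsum_sum_comm
          intro i _
          have := (hsuppFs i ν).union (hsuppF i ν)
          apply Set.Finite.subset this
          intro q hq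
          simp only [Function.mem_support, ne_eq] at hq
          by_cases hO : F i q * ν q = 0
          · left
            simp only [Function.mem_support, ne_eq]
            intro h0
            exact hq (by rw [sub_mul, h0, hO]; ring)
          · right
            simpa only [Function.mem_support, ne_eq] using hO
      _ = 0 := by simp [key]
  rw [hswap] at htot
  exact one_ne_zero htot.symm
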